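/- arXiv:2207.01421 — 3 statements merged into one kernel-verified Lean document; each statement's English description precedes it below -/
import Mathlib

section
/- For every fixed L > 0, the function ν ↦ J_ν(2L) is differentiable on ℝ and, as k → +∞ through positive integers, its derivative evaluated at negative integer order satisfies (d/dν)J_ν(2L)|_{ν=−k} ~ (−1)^{k+1}·√(2π/k)·(k/(eL))^k, i.e., the ratio of the two sides tends to 1. -/
/-!
Write `J_ν(2L) = L^ν F(ν)` with `F(z) = ∑ⱼ (-L²)ʲ / (j! Γ(z + j + 1))` (`besselSeries (-L²)`).
Since `1/Γ` is entire and bounded on `K + ℕ` for every compact `K` (by `1/Γ(z) = z/Γ(z + 1)`),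
the series `F` is entire and may be differentiated termwise. At `z = -k` the terms `j ≥ k` of
`F` and `F'` are `O(L^{2k}/k!)`, while for `j < k` only `F'` survives, through
`(1/Γ)'(-n) = (-1)ⁿ n!`. Hence
`(-1)^{k+1} L^k (d/dν) J_ν(2L)|_{ν=-k} = ∑_{j<k} L^{2j} (k-1-j)!/j! + O(L^{2k}/k!) ~ (k-1)!`,
and Stirling's formula gives the claim.
-/

/-!
Bessel function of the first kind of real order `ν` and argument `2L`, defined by its
absolutely convergent series, with `1/Γ` interpreted as `0` at nonpositive integers
(`Real.Gamma` vanishes there).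
-/
noncomputable def besselJ (L ν : ℝ) : ℝ :=
  ∑' j : ℕ, (-1 : ℝ) ^ j * L ^ (2 * (j : ℝ) + ν) * (Real.Gamma (ν + j + 1))⁻¹ / (Nat.factorial j)

open Filter Topology Nat Metric Complex

theorem neg_one_pow_sq {R : Type*} [Monoid R] [HasDistribNeg R] (n : ℕ) :
    ((-1 : R) ^ n) ^ 2 = 1 := by
  rw [← pow_mul, pow_mul', neg_one_sq, one_pow]

theorem neg_natCast_add_natCast_add_one {R : Type*} [Ring R] {k j : ℕ} (h : j < k) :
    -(k : R) + j + 1 = -((k - 1 - j : ℕ) : R) := by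
  rw [Nat.cast_sub (by omega), Nat.cast_sub (by omega)]
  push_cast
  abel

namespace Complex

theorem Gamma_inv_eq_mul_Gamma_inv_add_one (z : ℂ) :
    (Gamma z)⁻¹ = z * (Gamma (z + 1))⁻¹ := by
  rcases eq_or_ne z 0 with rfl | hz
  · simp
  · rw [Gamma_add_one z hz, mul_inv, ← mul_assoc, mul_inv_cancel₀ hz, one_mul]

theorem deriv_Gamma_inv (z : ℂ) : deriv (fun s => (Gamma s)⁻¹) z =
    (Gamma (z + 1))⁻¹ + z * deriv (fun s => (Gamma s)⁻¹) (z + 1) := by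
  have hshift :
      HasDerivAt (fun s => (Gamma (s + 1))⁻¹) (deriv (fun s => (Gamma s)⁻¹) (z + 1)) z :=
    (differentiable_one_div_Gamma (z + 1)).hasDerivAt.comp_add_const z 1
  have h := ((hasDerivAt_id z).mul hshift).congr_of_eventuallyEq
    (Eventually.of_forall Gamma_inv_eq_mul_Gamma_inv_add_one)
  simpa using h.deriv

theorem deriv_Gamma_inv_neg_nat (n : ℕ) :
    deriv (fun s => (Gamma s)⁻¹) (-n) = (-1) ^ n * n ! := by
  induction n with
  | zero => simpa using deriv_Gamma_inv 0
  | succ n ih =>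
    have hshift : -((n + 1 : ℕ) : ℂ) + 1 = -n := by push_cast; ring
    rw [deriv_Gamma_inv, hshift, ih, Gamma_neg_nat_eq_zero, inv_zero, factorial_succ]
    push_cast
    ring

theorem exists_norm_Gamma_inv_add_nat_le {K : Set ℂ} (hK : IsCompact K) :
    ∃ M, ∀ z ∈ K, ∀ n : ℕ, ‖(Gamma (z + n))⁻¹‖ ≤ M := by
  obtain ⟨R, hR⟩ := hK.isBounded.exists_norm_le
  set N := ⌈R⌉₊ + 1
  have hKN : IsCompact ((fun p : ℂ × ℝ => p.1 + p.2) '' K ×ˢ Set.Icc (0 : ℝ) N) :=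
    (hK.prod isCompact_Icc).image (by fun_prop)
  obtain ⟨M, hM⟩ :=
    hKN.exists_bound_of_continuousOn differentiable_one_div_Gamma.continuous.continuousOn
  refine ⟨M, fun z hz n => ?_⟩
  have hsmall : ∀ n ≤ N, ‖(Gamma (z + n))⁻¹‖ ≤ M := fun n hn =>
    hM _ ⟨(z, n), ⟨hz, n.cast_nonneg, Nat.cast_le.2 hn⟩, by simp⟩
  rcases le_total n N with hn | hn
  · exact hsmall n hn
  induction n, hn using Nat.le_induction with
  | base => exact hsmall N le_rfl
  | succ n hn ih =>
    have hre : 1 ≤ ‖z + n‖ := by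
      have h1 : -R ≤ z.re := by linarith [neg_abs_le z.re, abs_re_le_norm z, hR z hz]
      have h2 : R + 1 ≤ (N : ℝ) := by push_cast [N]; linarith [Nat.le_ceil R]
      calc (1 : ℝ) ≤ (z + n).re := by
            simp only [add_re, natCast_re]; linarith [(Nat.cast_le (α := ℝ)).2 hn]
        _ ≤ ‖z + n‖ := re_le_norm _
    rw [Gamma_inv_eq_mul_Gamma_inv_add_one (z + n), norm_mul] at ih
    push_cast
    rw [← add_assoc]
    calc ‖(Gamma (z + n + 1))⁻¹‖ ≤ ‖z + n‖ * ‖(Gamma (z + n + 1))⁻¹‖ :=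
          le_mul_of_one_le_left (norm_nonneg _) hre
      _ ≤ M := ih

theorem exists_norm_deriv_Gamma_inv_nat_add_one_le :
    ∃ M, ∀ n : ℕ, ‖deriv (fun s => (Gamma s)⁻¹) (n + 1)‖ ≤ M := by
  obtain ⟨M, hM⟩ := exists_norm_Gamma_inv_add_nat_le (isCompact_sphere (1 : ℂ) 1)
  refine ⟨M, fun n => ?_⟩
  have := norm_deriv_le_of_forall_mem_sphere_norm_le one_pos
    (differentiable_one_div_Gamma.diffContOnCl (s := ball ((n : ℂ) + 1) 1)) fun z hz => by
      simpa using hM (z - n) (by simpa [sub_sub, add_comm] using hz) n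
  simpa using this

end Complex

theorem HasSum.norm_le_of_pow_add_div_factorial {w s : ℂ} {a : ℕ → ℂ} {M : ℝ} {k : ℕ}
    (hs : HasSum (fun i => w ^ (i + k) / (i + k)! * a i) s) (ha : ∀ i, ‖a i‖ ≤ M) :
    ‖s‖ ≤ M * Real.exp ‖w‖ * (‖w‖ ^ k / k !) := by
  have hexp : HasSum (fun i => M * (‖w‖ ^ k / k !) * (‖w‖ ^ i / i !))
      (M * (‖w‖ ^ k / k !) * Real.exp ‖w‖) := by
    rw [Real.exp_eq_exp_ℝ]
    exact (NormedSpace.expSeries_div_hasSum_exp ‖w‖).mul_left _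
  refine (hs.norm_le_of_bounded hexp fun i => ?_).trans_eq (by ring)
  have hfac : (i ! * k ! : ℝ) ≤ (i + k)! := by
    exact_mod_cast Nat.le_of_dvd (factorial_pos _) (factorial_mul_factorial_dvd_factorial_add i k)
  have hM : 0 ≤ M := (norm_nonneg _).trans (ha 0)
  rw [norm_mul, norm_div, norm_pow, norm_natCast]
  calc ‖w‖ ^ (i + k) / (i + k)! * ‖a i‖ ≤ ‖w‖ ^ (i + k) / (i ! * k !) * M := by
        gcongr
        exact ha i
    _ = M * (‖w‖ ^ k / k !) * (‖w‖ ^ i / i !) := by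
        rw [pow_add]
        field_simp

noncomputable def besselTerm (w : ℂ) (j : ℕ) (z : ℂ) : ℂ :=
  w ^ j / j ! * (Gamma (z + j + 1))⁻¹

noncomputable def besselSeries (w z : ℂ) : ℂ := ∑' j, besselTerm w j z

-- Indexed by `m = k - 1`: `besselPrincipalSum (L²) (k - 1) = ∑_{j<k} L^{2j} (k-1-j)!/j!`.
def besselPrincipalSum {K : Type*} [Field K] (x : K) (m : ℕ) : K :=
  ∑ j ∈ Finset.range (m + 1), x ^ j * (m - j)! / j !

theorem exists_norm_besselTerm_le (w c : ℂ) :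
    ∃ M, ∀ j, ∀ z ∈ ball c 1, ‖besselTerm w j z‖ ≤ ‖w‖ ^ j / j ! * M := by
  obtain ⟨M, hM⟩ := exists_norm_Gamma_inv_add_nat_le (isCompact_closedBall c 1)
  refine ⟨M, fun j z hz => ?_⟩
  rw [besselTerm, norm_mul, norm_div, norm_pow, norm_natCast, add_assoc]
  gcongr
  exact_mod_cast hM z (ball_subset_closedBall hz) (j + 1)

theorem summable_besselTerm (w z : ℂ) : Summable (besselTerm w · z) := by
  obtain ⟨M, hM⟩ := exists_norm_besselTerm_le w z
  exact .of_norm_bounded ((Real.summable_pow_div_factorial ‖w‖).mul_right M)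
    fun j => hM j z (mem_ball_self one_pos)

theorem hasDerivAt_besselTerm (w : ℂ) (j : ℕ) (z : ℂ) :
    HasDerivAt (besselTerm w j) (w ^ j / j ! * deriv (fun s => (Gamma s)⁻¹) (z + j + 1)) z := by
  have h := (differentiable_one_div_Gamma (z + (j + 1))).hasDerivAt.comp_add_const z (j + 1)
  rw [show besselTerm w j = fun y => w ^ j / j ! * (Gamma (y + (j + 1)))⁻¹ from
    funext fun y => by rw [besselTerm, add_assoc], add_assoc]
  exact h.const_mul _

theorem differentiable_besselSeries (w : ℂ) : Differentiable ℂ (besselSeries w) := by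
  intro c
  obtain ⟨M, hM⟩ := exists_norm_besselTerm_le w c
  exact (differentiableOn_tsum_of_summable_norm
    ((Real.summable_pow_div_factorial ‖w‖).mul_right M)
    (fun j z _ => (hasDerivAt_besselTerm w j z).differentiableAt.differentiableWithinAt)
    isOpen_ball hM).differentiableAt (isOpen_ball.mem_nhds (mem_ball_self one_pos))

theorem hasSum_deriv_besselSeries (w z : ℂ) :
    HasSum (fun j : ℕ => w ^ j / j ! * deriv (fun s => (Gamma s)⁻¹) (z + j + 1))
      (deriv (besselSeries w) z) := by
  obtain ⟨M, hM⟩ := exists_norm_besselTerm_le w z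
  have h := hasSum_deriv_of_summable_norm ((Real.summable_pow_div_factorial ‖w‖).mul_right M)
    (fun j z _ => (hasDerivAt_besselTerm w j z).differentiableAt.differentiableWithinAt)
    isOpen_ball hM (mem_ball_self one_pos)
  simp only [(hasDerivAt_besselTerm w _ z).deriv] at h
  exact h

theorem hasSum_besselSeries_neg_nat (w : ℂ) (k : ℕ) :
    HasSum (fun i => w ^ (i + k) / (i + k)! * (i ! : ℂ)⁻¹) (besselSeries w (-k)) := by
  have h := (hasSum_nat_add_iff' k).2 (summable_besselTerm w (-k)).hasSum
  rw [Finset.sum_eq_zero, sub_zero] at h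
  · refine h.congr_fun fun i => ?_
    rw [besselTerm, show -(k : ℂ) + ((i + k : ℕ) : ℂ) + 1 = i + 1 by push_cast; ring,
      Gamma_nat_eq_factorial]
  · intro j hj
    rw [besselTerm, neg_natCast_add_natCast_add_one (Finset.mem_range.1 hj),
      Gamma_neg_nat_eq_zero, inv_zero, mul_zero]

theorem hasSum_deriv_besselSeries_neg_nat_add_one (w : ℂ) (m : ℕ) :
    HasSum (fun i => w ^ (i + (m + 1)) / (i + (m + 1))! * deriv (fun s => (Gamma s)⁻¹) (i + 1))
      (deriv (besselSeries w) (-(m + 1 : ℕ)) -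
        (-1) ^ m * besselPrincipalSum (-w) m) := by
  have h := (hasSum_nat_add_iff' (m + 1)).2 (hasSum_deriv_besselSeries w (-(m + 1 : ℕ)))
  have hsum : ∑ j ∈ Finset.range (m + 1),
      w ^ j / j ! * deriv (fun s => (Gamma s)⁻¹) (-((m + 1 : ℕ) : ℂ) + j + 1) =
      (-1) ^ m * besselPrincipalSum (-w) m := by
    rw [besselPrincipalSum, Finset.mul_sum]
    refine Finset.sum_congr rfl fun j hj => ?_
    have hjm := Finset.mem_range.1 hj
    rw [neg_natCast_add_natCast_add_one hjm, deriv_Gamma_inv_neg_nat, Nat.add_sub_cancel,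
      neg_pow w, ← pow_sub_mul_pow (-1 : ℂ) (Nat.le_of_lt_succ hjm)]
    linear_combination (-(w ^ j / j ! * (-1) ^ (m - j) * (m - j)!)) * neg_one_pow_sq (R := ℂ) j
  rw [hsum] at h
  refine h.congr_fun fun i => ?_
  rw [show -((m + 1 : ℕ) : ℂ) + ((i + (m + 1) : ℕ) : ℂ) + 1 = i + 1 by push_cast; ring]

theorem norm_besselSeries_neg_nat_le (w : ℂ) (k : ℕ) :
    ‖besselSeries w (-k)‖ ≤ Real.exp ‖w‖ * (‖w‖ ^ k / k !) := by
  have h := (hasSum_besselSeries_neg_nat w k).norm_le_of_pow_add_div_factorial (M := 1)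
    fun i => by simpa using inv_le_one_of_one_le₀ (one_le_cast.2 (factorial_pos i))
  rwa [one_mul] at h

theorem exists_norm_deriv_besselSeries_neg_nat_add_one_sub_le (w : ℂ) :
    ∃ M, ∀ m : ℕ, ‖deriv (besselSeries w) (-(m + 1 : ℕ)) -
      (-1) ^ m * besselPrincipalSum (-w) m‖ ≤
        M * Real.exp ‖w‖ * (‖w‖ ^ (m + 1) / (m + 1)!) := by
  obtain ⟨M, hM⟩ := exists_norm_deriv_Gamma_inv_nat_add_one_le
  exact ⟨M, fun m =>
    (hasSum_deriv_besselSeries_neg_nat_add_one w m).norm_le_of_pow_add_div_factorial hM⟩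

theorem ofReal_besselJ {L : ℝ} (hL : 0 < L) (x : ℝ) :
    (besselJ L x : ℂ) = (L : ℂ) ^ (x : ℂ) * besselSeries (-(L : ℂ) ^ 2) x := by
  rw [besselJ, ofReal_tsum, besselSeries, ← tsum_mul_left]
  congr 1
  funext j
  rw [Real.rpow_add hL, show 2 * (j : ℝ) = ((2 * j : ℕ) : ℝ) by push_cast; ring,
    Real.rpow_natCast, pow_mul]
  push_cast [besselTerm, ofReal_cpow hL.le, ← Gamma_ofReal]
  ring

theorem hasDerivAt_besselJ {L : ℝ} (hL : 0 < L) (x : ℝ) :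
    HasDerivAt (besselJ L) (L ^ x * (Real.log L * (besselSeries (-(L : ℂ) ^ 2) x).re +
      (deriv (besselSeries (-(L : ℂ) ^ 2)) x).re)) x := by
  have h := ((hasStrictDerivAt_const_cpow (Or.inl (ofReal_ne_zero.2 hL.ne'))).hasDerivAt.mul
    (differentiable_besselSeries (-(L : ℂ) ^ 2) x).hasDerivAt).real_of_complex
  convert h using 1
  · funext y
    rw [Pi.mul_apply, ← ofReal_besselJ hL, ofReal_re]
  · rw [← ofReal_cpow hL.le, ← ofReal_log hL.le, mul_assoc, ← mul_add, re_ofReal_mul, add_re,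
      re_ofReal_mul]

theorem exists_abs_deriv_besselJ_neg_nat_add_one_sub_le {L : ℝ} (hL : 0 < L) :
    ∃ B, ∀ m : ℕ, |(-1) ^ m * L ^ (m + 1) * deriv (besselJ L) (-(m + 1 : ℕ)) -
      besselPrincipalSum (L ^ 2) m| ≤ B * ((L ^ 2) ^ (m + 1) / (m + 1)!) := by
  set w := -(L : ℂ) ^ 2
  have hw : ‖w‖ = L ^ 2 := by simp [w]
  obtain ⟨M, hM⟩ := exists_norm_deriv_besselSeries_neg_nat_add_one_sub_le w
  refine ⟨(|Real.log L| + M) * Real.exp (L ^ 2), fun m => ?_⟩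
  set Q := besselPrincipalSum (L ^ 2) m
  set s := besselSeries w (-((m + 1 : ℕ) : ℂ))
  set e := deriv (besselSeries w) (-((m + 1 : ℕ) : ℂ)) - (-1) ^ m * Q
  have hs := norm_besselSeries_neg_nat_le w (m + 1)
  have he := hM m
  rw [hw] at hs he
  rw [show besselPrincipalSum (-w) m = (Q : ℂ) by simp [w, Q, besselPrincipalSum]] at he
  have hderiv : (deriv (besselSeries w) (-((m + 1 : ℕ) : ℂ))).re = e.re + (-1) ^ m * Q := by
    rw [show deriv (besselSeries w) (-((m + 1 : ℕ) : ℂ)) = e + (((-1) ^ m * Q : ℝ) : ℂ) by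
      push_cast [e]; ring, add_re, ofReal_re]
  rw [(hasDerivAt_besselJ hL _).deriv, Real.rpow_neg hL.le, Real.rpow_natCast,
    show ((-((m + 1 : ℕ) : ℝ) : ℝ) : ℂ) = -((m + 1 : ℕ) : ℂ) by push_cast; ring, hderiv]
  have hLm : L ^ (m + 1) ≠ 0 := by positivity
  calc _ = |(-1) ^ m * (Real.log L * s.re + e.re)| := by
        congr 1
        field_simp
        linear_combination Q * neg_one_pow_sq (R := ℝ) m
    _ ≤ |Real.log L| * ‖s‖ + ‖e‖ := by
        rw [abs_mul, abs_neg_one_pow, one_mul]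
        refine (abs_add_le _ _).trans (add_le_add ?_ (abs_re_le_norm e))
        rw [abs_mul]
        exact mul_le_mul_of_nonneg_left (abs_re_le_norm s) (abs_nonneg _)
    _ ≤ |Real.log L| * (Real.exp (L ^ 2) * ((L ^ 2) ^ (m + 1) / (m + 1)!)) +
          M * Real.exp (L ^ 2) * ((L ^ 2) ^ (m + 1) / (m + 1)!) := by
        gcongr
    _ = _ := by ring

theorem factorial_le_besselPrincipalSum {x : ℝ} (hx : 0 ≤ x) (m : ℕ) :
    (m ! : ℝ) ≤ besselPrincipalSum x m := by
  rw [besselPrincipalSum, Finset.sum_range_succ']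
  simp only [pow_zero, one_mul, Nat.sub_zero, factorial_zero, cast_one, div_one]
  exact le_add_of_nonneg_left (Finset.sum_nonneg fun j _ => by positivity)

theorem besselPrincipalSum_add_one_le {x : ℝ} (hx : 0 ≤ x) (m : ℕ) :
    besselPrincipalSum x (m + 1) ≤ (m + 1)! + m ! * Real.exp x := by
  rw [besselPrincipalSum, Finset.sum_range_succ']
  simp only [pow_zero, one_mul, Nat.sub_zero, factorial_zero, cast_one, div_one,
    Nat.add_sub_add_right]
  rw [add_comm]
  gcongr
  have hexp : ∑ j ∈ Finset.range (m + 1), x ^ (j + 1) / (j + 1)! ≤ Real.exp x := by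
    refine le_trans ?_ (Real.sum_le_exp_of_nonneg hx (m + 2))
    rw [Finset.sum_range_succ' _ (m + 1)]
    exact le_add_of_nonneg_right (by positivity)
  calc ∑ j ∈ Finset.range (m + 1), x ^ (j + 1) * (m - j)! / (j + 1)!
      ≤ ∑ j ∈ Finset.range (m + 1), m ! * (x ^ (j + 1) / (j + 1)!) := by
        gcongr with j
        rw [mul_div_right_comm, mul_comm]
        gcongr
        exact Nat.sub_le m j
    _ ≤ m ! * Real.exp x := by
        rw [← Finset.mul_sum]
        gcongr

theorem tendsto_besselPrincipalSum_div_factorial {x : ℝ} (hx : 0 ≤ x) :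
    Tendsto (fun m => besselPrincipalSum x m / m !) atTop (𝓝 1) := by
  rw [← tendsto_add_atTop_iff_nat 1]
  have hupper : Tendsto (fun m : ℕ => 1 + Real.exp x / ((m : ℝ) + 1)) atTop (𝓝 1) := by
    have h := ((tendsto_const_nhds (x := (1 : ℝ))).add
      (tendsto_const_div_atTop_nhds_zero_nat (Real.exp x))).comp (tendsto_add_atTop_nat 1)
    rw [add_zero] at h
    exact h.congr fun m => by simp
  refine tendsto_of_tendsto_of_tendsto_of_le_of_le tendsto_const_nhds hupper (fun m => ?_)
    fun m => ?_
  · rw [le_div_iff₀ (by positivity), one_mul]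
    exact factorial_le_besselPrincipalSum hx _
  · rw [div_le_iff₀ (by positivity)]
    refine (besselPrincipalSum_add_one_le hx m).trans_eq ?_
    push_cast [factorial_succ]
    field_simp

theorem tendsto_deriv_besselJ_neg_nat_add_one_div_factorial {L : ℝ} (hL : 0 < L) :
    Tendsto (fun m : ℕ => (-1) ^ m * L ^ (m + 1) * deriv (besselJ L) (-(m + 1 : ℕ)) / m !)
      atTop (𝓝 1) := by
  obtain ⟨B, hB⟩ := exists_abs_deriv_besselJ_neg_nat_add_one_sub_le hL
  have hsmall : Tendsto (fun m : ℕ => B * ((L ^ 2) ^ (m + 1) / (m + 1)!)) atTop (𝓝 0) := by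
    simpa using ((FloorSemiring.tendsto_pow_div_factorial_atTop (L ^ 2)).comp
      (tendsto_add_atTop_nat 1)).const_mul B
  have hrem : Tendsto (fun m : ℕ => ((-1) ^ m * L ^ (m + 1) * deriv (besselJ L) (-(m + 1 : ℕ)) -
      besselPrincipalSum (L ^ 2) m) / m !) atTop (𝓝 0) := by
    refine squeeze_zero_norm (fun m => ?_) hsmall
    rw [norm_div, Real.norm_eq_abs, Real.norm_eq_abs, Nat.abs_cast]
    exact (_root_.div_le_self (abs_nonneg _) (one_le_cast.2 (factorial_pos m))).trans (hB m)
  simpa [sub_div] using (tendsto_besselPrincipalSum_div_factorial (sq_nonneg L)).add hrem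

theorem tendsto_factorial_div_stirling_add_one :
    Tendsto (fun m : ℕ => (m ! : ℝ) /
      (Real.sqrt (2 * Real.pi / (m + 1 : ℕ)) * (((m + 1 : ℕ) : ℝ) / Real.exp 1) ^ (m + 1)))
      atTop (𝓝 1) := by
  have h := (Stirling.tendsto_stirlingSeq_sqrt_pi.comp (tendsto_add_atTop_nat 1)).div_const
    (Real.sqrt Real.pi)
  rw [div_self (Real.sqrt_ne_zero'.2 Real.pi_pos)] at h
  refine h.congr fun m => ?_
  have hn : (0 : ℝ) < (m + 1 : ℕ) := by positivity
  have hsqrt : Real.sqrt (2 * Real.pi / (m + 1 : ℕ)) * (m + 1 : ℕ) =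
      Real.sqrt (2 * (m + 1 : ℕ)) * Real.sqrt Real.pi := by
    rw [← Real.sqrt_mul (by positivity), ← Real.sqrt_sq hn.le,
      ← Real.sqrt_mul (by positivity), Real.sqrt_sq hn.le]
    congr 1
    field_simp
  simp only [Function.comp_apply, Stirling.stirlingSeq]
  rw [factorial_succ, cast_mul]
  field_simp
  rw [mul_comm _ (2 : ℝ)]
  linarith

/-- for fixed `L > 0`, the map `ν ↦ J_ν(2L)` is differentiable on `ℝ` and,
as `k → +∞` through positive integers,
`(d/dν)J_ν(2L)|_{ν=-k} ~ (-1)^{k+1} √(2π/k) (k/(eL))^k`. -/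
theorem besselJ_deriv_asymptotic_of_large_negative_order (L : ℝ) (hL : 0 < L) :
    Differentiable ℝ (besselJ L) ∧
    Filter.Tendsto
      (fun k : ℕ =>
        deriv (besselJ L) (-(k : ℝ)) /
          ((-1 : ℝ) ^ (k + 1) * Real.sqrt (2 * Real.pi / k) *
            ((k : ℝ) / (Real.exp 1 * L)) ^ k))
      Filter.atTop (nhds 1) := by
  refine ⟨fun x => (hasDerivAt_besselJ hL x).differentiableAt, ?_⟩
  rw [← tendsto_add_atTop_iff_nat 1]
  have h := (tendsto_deriv_besselJ_neg_nat_add_one_div_factorial hL).mul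
    tendsto_factorial_div_stirling_add_one
  rw [one_mul] at h
  refine h.congr fun m => ?_
  simp only [div_pow, mul_pow, pow_succ (-1 : ℝ)]
  field_simp
  rw [neg_one_pow_sq, one_mul]
end

section
/- Let σ : ℤ' → [0,1] satisfy Σ_{l∈ℤ', l<0} σ(l) < ∞. Then for every L > 0 and every s ∈ ℤ', the double series Σ_{a∈ℤ', a>s} Σ_{b∈ℤ'} J_{a+b}(2L)² σ(b) is finite. (This is the Hilbert–Schmidt bound showing that the truncated finite-temperature discrete Bessel operator P_s K_σ^Be P_s is trace class.) -/
/-!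
Bessel functions of the first kind of integer order and argument `2L`:
`J_n(2L) = ∑_{j≥0} (-1)^j L^{2j+n}/(j!(n+j)!)` for `n ≥ 0`, and `J_{-n} = (-1)^n J_n`.

Half-integers `ℤ' = ℤ + 1/2` are parametrized by `ℤ`: the half-integer `a = m + 1/2`
corresponds to `m : ℤ`; a function `σ : ℤ' → [0,1]` is represented as `σ : ℤ → ℝ`.
For `a = m + 1/2` and `b = n + 1/2` the order `a + b = m + n + 1 ∈ ℤ`; the condition `l < 0`
on `l = k + 1/2 ∈ ℤ'` reads `k < 0`, and `a > s` (with `s = t + 1/2`) reads `m > t`.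
-/
noncomputable def besselJnat (L : ℝ) (n : ℕ) : ℝ :=
  ∑' j : ℕ, (-1 : ℝ) ^ j * L ^ (2 * j + n) / (Nat.factorial j * Nat.factorial (n + j))

noncomputable def besselJint (L : ℝ) (n : ℤ) : ℝ :=
  if 0 ≤ n then besselJnat L n.toNat else (-1 : ℝ) ^ (-n).toNat * besselJnat L (-n).toNat

/-!
The terms of `J_n(2L)` are dominated by those of `e^{L²} |L|^n / n!`, so `J_k(2L)²` decays
geometrically in `|k|`. Split the double series according to the sign of `b`. For `b ≥ 0`
use `σ ≤ 1`: the terms `J_{a+b}²` with `a > s` and `b ≥ 0` are dominated by a product of two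
geometric series. For `b < 0` substitute `k = a + b`: the terms become `J_k² σ(b)`, a product
of two summable families.
-/

open Nat

section GeometricDecay

variable {r : ℝ}

lemma summable_pow_natAbs (hr0 : 0 ≤ r) (hr1 : r < 1) : Summable fun k : ℤ => r ^ k.natAbs :=
  .of_nat_of_neg (by simpa only [Int.natAbs_natCast] using summable_geometric_of_lt_one hr0 hr1)
    (by simpa only [Int.natAbs_neg, Int.natAbs_natCast] using summable_geometric_of_lt_one hr0 hr1)

lemma pow_natAbs_add_mul_le (hr0 : 0 ≤ r) (hr1 : r ≤ 1) {a b : ℤ} (ha : 0 ≤ a) (hb : 0 ≤ b)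
    (c : ℤ) : r ^ (a + b + c).natAbs * r ^ c.natAbs ≤ r ^ a.natAbs * r ^ b.natAbs := by
  rw [← pow_add, ← pow_add]
  exact pow_le_pow_of_le_one hr0 hr1 (by omega)

lemma summable_mul_comp_add {u τ : ℤ → ℝ} (hu : Summable u) (hτ : Summable τ) (hu0 : 0 ≤ u)
    (hτ0 : 0 ≤ τ) : Summable fun p : ℤ × ℤ => u (p.1 + p.2) * τ p.2 := by
  refine (hu.mul_of_nonneg hτ hu0 hτ0).comp_injective (i := fun p : ℤ × ℤ => (p.1 + p.2, p.2)) ?_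
  rintro ⟨a, b⟩ ⟨c, d⟩ h
  simp only [Prod.mk.injEq] at h ⊢
  omega

theorem summable_shift_mul_of_le_geometric {u σ : ℤ → ℝ} {C : ℝ} (hr0 : 0 < r) (hr1 : r < 1)
    (hu0 : 0 ≤ u) (hu : ∀ k, u k ≤ C * r ^ k.natAbs) (hσ0 : 0 ≤ σ) (hσ1 : σ ≤ 1)
    (hsum : Summable fun k : {k : ℤ // k < 0} => σ k) (t : ℤ) :
    Summable fun p : {m : ℤ // t < m} × ℤ => u (p.1 + p.2 + 1) * σ p.2 := by
  set τ := {k : ℤ | k < 0}.indicator σ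
  have hτ0 : 0 ≤ τ := Set.indicator_nonneg fun k _ => hσ0 k
  have hC : 0 ≤ C := by simpa using (hu0 0).trans (hu 0)
  have hgeom := summable_pow_natAbs hr0.le hr1
  have hneg : Summable fun p : ℤ × ℤ => u (p.1 + p.2 + 1) * τ p.2 :=
    summable_mul_comp_add (u := fun k => u (k + 1))
      ((hgeom.mul_left C).of_nonneg_of_le hu0 hu |>.comp_injective (add_left_injective 1))
      (summable_subtype_iff_indicator.mp hsum) (fun k => hu0 (k + 1)) hτ0
  have hpos : Summable fun p : ℤ × ℤ =>
      C / r ^ (t + 2).natAbs * (r ^ (p.1 - (t + 1)).natAbs * r ^ p.2.natAbs) :=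
    ((hgeom.comp_injective (sub_left_injective (b := t + 1))).mul_of_nonneg hgeom
      (fun _ => pow_nonneg hr0.le _) fun _ => pow_nonneg hr0.le _).mul_left _
  refine .of_nonneg_of_le (fun p => mul_nonneg (hu0 _) (hσ0 _)) (fun p => ?_)
    ((hneg.add hpos).comp_injective (Subtype.val_injective.prodMap Function.injective_id))
  obtain ⟨⟨m, hm⟩, n⟩ := p
  rcases lt_or_ge n 0 with hn | hn
  · have hστ : σ n = τ n := (Set.indicator_of_mem (show n ∈ {k : ℤ | k < 0} from hn) σ).symm
    rw [hστ]
    exact le_add_of_nonneg_right (by positivity)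
  · calc u (m + n + 1) * σ n ≤ u (m + n + 1) := mul_le_of_le_one_right (hu0 _) (hσ1 n)
      _ ≤ C * r ^ (m + n + 1).natAbs := hu _
      _ ≤ C / r ^ (t + 2).natAbs * (r ^ (m - (t + 1)).natAbs * r ^ n.natAbs) := by
        have key := pow_natAbs_add_mul_le hr0.le hr1.le (by omega : 0 ≤ m - (t + 1)) hn (t + 2)
        rw [show m - (t + 1) + n + (t + 2) = m + n + 1 by ring] at key
        rw [div_mul_eq_mul_div, le_div_iff₀ (by positivity), mul_assoc]
        exact mul_le_mul_of_nonneg_left key hC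
      _ ≤ _ := le_add_of_nonneg_left (mul_nonneg (hu0 _) (hτ0 _))

end GeometricDecay

lemma abs_besselJnat_le (L : ℝ) (n : ℕ) :
    |besselJnat L n| ≤ Real.exp (L ^ 2) * (|L| ^ n / n !) := by
  have hexp : HasSum (fun j : ℕ => (L ^ 2) ^ j / j ! * (|L| ^ n / n !))
      (Real.exp (L ^ 2) * (|L| ^ n / n !)) := by
    rw [Real.exp_eq_exp_ℝ]
    exact (NormedSpace.expSeries_div_hasSum_exp (L ^ 2)).mul_right _
  rw [← Real.norm_eq_abs, besselJnat]
  refine tsum_of_norm_bounded hexp fun j => ?_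
  have hfact : (n ! : ℝ) ≤ (n + j) ! := by exact_mod_cast factorial_le (le_add_right n j)
  calc ‖(-1 : ℝ) ^ j * L ^ (2 * j + n) / ((j ! : ℝ) * (n + j) !)‖
      = (L ^ 2) ^ j / j ! * (|L| ^ n / (n + j) !) := by
        rw [Real.norm_eq_abs, abs_div, abs_of_pos (by positivity : (0 : ℝ) < j ! * (n + j) !),
          abs_mul, abs_pow, abs_neg, abs_one, one_pow, one_mul, abs_pow, pow_add, pow_mul, sq_abs]
        ring
    _ ≤ (L ^ 2) ^ j / j ! * (|L| ^ n / n !) := by gcongr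

lemma abs_besselJint_le (L : ℝ) (k : ℤ) :
    |besselJint L k| ≤ Real.exp (L ^ 2) * (|L| ^ k.natAbs / k.natAbs !) := by
  unfold besselJint
  split_ifs with hk
  · rw [show k.toNat = k.natAbs by omega]
    exact abs_besselJnat_le L _
  · rw [abs_mul, abs_pow, abs_neg, abs_one, one_pow, one_mul,
      show (-k).toNat = k.natAbs by omega]
    exact abs_besselJnat_le L _

lemma besselJint_sq_le (L : ℝ) (k : ℤ) :
    besselJint L k ^ 2 ≤ (Real.exp (L ^ 2) * Real.exp (2 * |L|)) ^ 2 * (1 / 4) ^ k.natAbs := by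
  have hgeom : |L| ^ k.natAbs / k.natAbs ! ≤ Real.exp (2 * |L|) * (1 / 2) ^ k.natAbs :=
    calc |L| ^ k.natAbs / k.natAbs ! = (2 * |L|) ^ k.natAbs / k.natAbs ! * (1 / 2) ^ k.natAbs := by
          rw [mul_pow, div_pow, one_pow]; field_simp
      _ ≤ Real.exp (2 * |L|) * (1 / 2) ^ k.natAbs := by
          exact mul_le_mul_of_nonneg_right (Real.pow_div_factorial_le_exp _ (by positivity) _)
            (by positivity)
  calc besselJint L k ^ 2 = |besselJint L k| ^ 2 := (sq_abs _).symm
    _ ≤ (Real.exp (L ^ 2) * (Real.exp (2 * |L|) * (1 / 2) ^ k.natAbs)) ^ 2 := by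
        gcongr; exact (abs_besselJint_le L k).trans (by gcongr)
    _ = (Real.exp (L ^ 2) * Real.exp (2 * |L|)) ^ 2 * (1 / 4) ^ k.natAbs := by
        have hquarter : ((1 / 2 : ℝ) ^ k.natAbs) ^ 2 = (1 / 4) ^ k.natAbs := by
          rw [← pow_mul, mul_comm, pow_mul]; norm_num
        rw [mul_pow, mul_pow, hquarter, mul_pow, mul_assoc]

theorem hilbertSchmidt_bound_general (σ : ℤ → ℝ) (hσ : ∀ k : ℤ, σ k ∈ Set.Icc (0 : ℝ) 1)
    (hsum : Summable (fun k : {k : ℤ // k < 0} => σ k)) (L : ℝ) (t : ℤ) :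
    Summable (fun p : {m : ℤ // t < m} × ℤ =>
      besselJint L ((p.1 : ℤ) + p.2 + 1) ^ 2 * σ p.2) :=
  summable_shift_mul_of_le_geometric (by norm_num) (by norm_num) (fun _ => sq_nonneg _)
    (besselJint_sq_le L) (fun k => (hσ k).1) (fun k => (hσ k).2) hsum t

/-- if `σ : ℤ' → [0,1]` satisfies `∑_{l<0} σ(l) < ∞`, then for every `L > 0`
and `s ∈ ℤ'`, the double series `∑_{a>s} ∑_{b∈ℤ'} J_{a+b}(2L)² σ(b)` is finite (the
Hilbert–Schmidt bound showing `P_s K_σ^Be P_s` is trace class). -/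
theorem hilbertSchmidt_bound (σ : ℤ → ℝ) (hσ : ∀ k : ℤ, σ k ∈ Set.Icc (0 : ℝ) 1)
    (hsum : Summable (fun k : {k : ℤ // k < 0} => σ k)) (L : ℝ) (hL : 0 < L) (t : ℤ) :
    Summable (fun p : {m : ℤ // t < m} × ℤ =>
      besselJint L ((p.1 : ℤ) + p.2 + 1) ^ 2 * σ p.2) :=
  hilbertSchmidt_bound_general σ hσ hsum L t
end

section
/- Let f : ℂ → ℂ be holomorphic on ℂ \ ℤ'. Suppose that for each a ∈ ℤ' there is a complex number r(a) such that the function z ↦ f(z) − r(a)/(z − a) extends holomorphically to a neighborhood of a (i.e., f has at most a simple pole at a with residue r(a)), and suppose that max_{|z|=n} |f(z)| → 0 as n → ∞ through positive integers. Then for every z ∈ ℂ \ ℤ', the symmetric partial sums Σ_{a∈ℤ', |a|<n} r(a)/(z − a) converge, as n → ∞ through positive integers, to f(z). -/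
/-!
For `n > ‖z‖` the function `g = f - ∑_{|a|<n} r(a)/(· - a)` has only removable singularities on
the closed disc of radius `n`; filling them in (passing to the meromorphic normal form) gives a
function holomorphic on the disc, and the Cauchy integral formula applies to it. The circle integral
of each `r(a)/((w - z)(w - a))` vanishes since both poles lie inside the circle, so
`g z = (2πi)⁻¹ ∮_{|w|=n} f(w)/(w - z) dw`, which is at most `n · max_{|w|=n} ‖f‖ / (n - ‖z‖)`
and therefore tends to `0`.
-/

open scoped Topology
open Complex Metric Set Filter Real

section NormalForm

variable {𝕜 : Type*} [NontriviallyNormedField 𝕜] {E : Type*} [NormedAddCommGroup E]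
  [NormedSpace 𝕜 E] {g φ : 𝕜 → E} {U : Set 𝕜} {x : 𝕜}

theorem MeromorphicOn.toMeromorphicNFOn_eventuallyEq_of_eventuallyEq_nhdsNE
    (hg : MeromorphicOn g U) (hx : x ∈ U) (hφ : AnalyticAt 𝕜 φ x) (hgφ : g =ᶠ[𝓝[≠] x] φ) :
    toMeromorphicNFOn g U =ᶠ[𝓝 x] φ := by
  have hφNF : toMeromorphicNFAt φ x = φ := toMeromorphicNFAt_eq_self.2 hφ.meromorphicNFAt
  simpa [hφNF] using (toMeromorphicNFOn_eq_toMeromorphicNFAt_on_nhds hg hx).trans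
    (toMeromorphicNFAt_eventuallyEq_nhds_congr hgφ)

end NormalForm

variable {E : Type*} [NormedAddCommGroup E] [NormedSpace ℂ E]

theorem two_pi_I_inv_smul_circleIntegral_sub_inv_smul_of_removable [CompleteSpace E] {g : ℂ → E}
    {c z : ℂ} {R : ℝ} (hg : ∀ x ∈ closedBall c R, ∃ φ, AnalyticAt ℂ φ x ∧ g =ᶠ[𝓝[≠] x] φ)
    (hz : z ∈ ball c R) (hgz : ContinuousAt g z) (hgR : ∀ w ∈ sphere c R, ContinuousAt g w) :
    (2 * π * I : ℂ)⁻¹ • (∮ w in C(c, R), (w - z)⁻¹ • g w) = g z := by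
  have hmer : MeromorphicOn g (closedBall c R) := fun x hx ↦
    let ⟨_, hφ, hgφ⟩ := hg x hx; hφ.meromorphicAt.congr hgφ.symm
  set G := toMeromorphicNFOn g (closedBall c R)
  have hG : ∀ x ∈ closedBall c R, ∃ φ, AnalyticAt ℂ φ x ∧ G =ᶠ[𝓝 x] φ ∧ g =ᶠ[𝓝[≠] x] φ :=
    fun x hx ↦ let ⟨φ, hφ, hgφ⟩ := hg x hx
      ⟨φ, hφ, hmer.toMeromorphicNFOn_eventuallyEq_of_eventuallyEq_nhdsNE hx hφ hgφ, hgφ⟩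
  have hGd : DifferentiableOn ℂ G (closedBall c R) := fun x hx ↦ by
    obtain ⟨φ, hφ, hGφ, -⟩ := hG x hx
    exact ((analyticAt_congr hGφ).2 hφ).differentiableAt.differentiableWithinAt
  have hGg : ∀ x ∈ closedBall c R, ContinuousAt g x → G x = g x := fun x hx hgx ↦ by
    obtain ⟨φ, hφ, hGφ, hgφ⟩ := hG x hx
    rw [hGφ.eq_of_nhds, ← ((hgx.eventuallyEq_nhds_iff_eventuallyEq_nhdsNE hφ.continuousAt).1
      hgφ).eq_of_nhds]
  have hGg_sphere : (∮ w in C(c, R), (w - z)⁻¹ • G w) = ∮ w in C(c, R), (w - z)⁻¹ • g w :=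
    circleIntegral.integral_congr (nonempty_ball.1 ⟨z, hz⟩).le fun w hw ↦ by
      simp only [hGg w (sphere_subset_closedBall hw) (hgR w hw)]
  rw [← hGg z (ball_subset_closedBall hz) hgz, ← hGg_sphere]
  exact (hGd.mono closure_ball_subset_closedBall).diffContOnCl
    |>.two_pi_i_inv_smul_circleIntegral_sub_inv_smul hz

theorem continuousOn_sub_inv_sphere_of_mem_ball {c a : ℂ} {R : ℝ} (ha : a ∈ ball c R) :
    ContinuousOn (fun w ↦ (w - a)⁻¹) (sphere c R) :=
  (continuousOn_id.sub continuousOn_const).inv₀ fun _ hw ↦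
    sub_ne_zero.2 (sphere_disjoint_ball.ne_of_mem hw ha)

theorem circleIntegrable_sub_inv_of_mem_ball {c a : ℂ} {R : ℝ} (ha : a ∈ ball c R) :
    CircleIntegrable (fun w ↦ (w - a)⁻¹) c R :=
  (continuousOn_sub_inv_sphere_of_mem_ball ha).circleIntegrable (nonempty_ball.1 ⟨a, ha⟩).le

theorem circleIntegral_sub_inv_mul_sub_inv_eq_zero {c z a : ℂ} {R : ℝ} (hz : z ∈ ball c R)
    (ha : a ∈ ball c R) (hza : z ≠ a) :
    (∮ w in C(c, R), (w - z)⁻¹ * (w - a)⁻¹) = 0 := by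
  have hR : 0 ≤ R := (nonempty_ball.1 ⟨z, hz⟩).le
  have hsplit : EqOn (fun w ↦ (w - z)⁻¹ * (w - a)⁻¹)
      (fun w ↦ (z - a)⁻¹ * ((w - z)⁻¹ - (w - a)⁻¹)) (sphere c R) := fun w hw ↦ by
    have := sub_ne_zero.2 (sphere_disjoint_ball.ne_of_mem hw hz)
    have := sub_ne_zero.2 (sphere_disjoint_ball.ne_of_mem hw ha)
    have := sub_ne_zero.2 hza
    field_simp
    ring
  rw [circleIntegral.integral_congr hR hsplit, circleIntegral.integral_const_mul,
    circleIntegral.integral_sub (circleIntegrable_sub_inv_of_mem_ball hz)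
      (circleIntegrable_sub_inv_of_mem_ball ha),
    circleIntegral.integral_sub_inv_of_mem_ball hz, circleIntegral.integral_sub_inv_of_mem_ball ha,
    sub_self, mul_zero]

theorem circleIntegral_sub_inv_smul_sum_div_sub_eq_zero {ι : Type*} (T : Finset ι) (a r : ι → ℂ)
    {c z : ℂ} {R : ℝ} (hz : z ∈ ball c R) (ha : ∀ j ∈ T, a j ∈ ball c R) (hza : ∀ j ∈ T, z ≠ a j) :
    (∮ w in C(c, R), (w - z)⁻¹ • ∑ j ∈ T, r j / (w - a j)) = 0 := by
  have hR : 0 ≤ R := (nonempty_ball.1 ⟨z, hz⟩).le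
  simp_rw [smul_eq_mul, Finset.mul_sum, div_eq_mul_inv, mul_left_comm _ (r _)]
  rw [circleIntegral.integral_fun_sum fun j hj ↦ ?_]
  · refine Finset.sum_eq_zero fun j hj ↦ ?_
    rw [circleIntegral.integral_const_mul, circleIntegral_sub_inv_mul_sub_inv_eq_zero hz (ha j hj)
      (hza j hj), mul_zero]
  · exact (continuousOn_const.mul ((continuousOn_sub_inv_sphere_of_mem_ball hz).mul
      (continuousOn_sub_inv_sphere_of_mem_ball (ha j hj)))).circleIntegrable hR

theorem analyticAt_sum_div_sub {ι : Type*} (T : Finset ι) (a r : ι → ℂ) {x : ℂ}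
    (hx : ∀ j ∈ T, x ≠ a j) : AnalyticAt ℂ (fun w ↦ ∑ j ∈ T, r j / (w - a j)) x :=
  Finset.analyticAt_fun_sum T fun j hj ↦
    analyticAt_const.div (analyticAt_id.sub analyticAt_const) (sub_ne_zero.2 (hx j hj))

theorem exists_analyticAt_eventuallyEq_sub_sum_div_sub {ι : Type*} {T : Finset ι}
    {a r : ι → ℂ} {f : ℂ → ℂ} {x : ℂ} (hinj : Set.InjOn a T)
    (hpole : ∀ j ∈ T, ∃ h : ℂ → ℂ, AnalyticAt ℂ h (a j) ∧
      ∀ᶠ w in 𝓝[≠] (a j), h w = f w - r j / (w - a j))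
    (hf : (∀ j ∈ T, x ≠ a j) → AnalyticAt ℂ f x) :
    ∃ φ, AnalyticAt ℂ φ x ∧ (fun w ↦ f w - ∑ j ∈ T, r j / (w - a j)) =ᶠ[𝓝[≠] x] φ := by
  classical
  by_cases hxa : ∃ k ∈ T, x = a k
  · obtain ⟨k, hk, rfl⟩ := hxa
    obtain ⟨h, hh, hfh⟩ := hpole k hk
    refine ⟨fun w ↦ h w - ∑ j ∈ T.erase k, r j / (w - a j),
      hh.sub (analyticAt_sum_div_sub _ a r fun j hj hkj ↦ ?_), ?_⟩
    · exact (Finset.ne_of_mem_erase hj) (hinj (Finset.mem_of_mem_erase hj) hk hkj.symm)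
    · filter_upwards [hfh] with w hw
      simp only [hw, ← Finset.add_sum_erase T _ hk]
      ring
  · push Not at hxa
    exact ⟨_, (hf hxa).sub (analyticAt_sum_div_sub T a r hxa), .rfl⟩

theorem sub_sum_div_sub_eq_circleIntegral {ι : Type*} {T : Finset ι} {a r : ι → ℂ} {f : ℂ → ℂ}
    {c z : ℂ} {R : ℝ} (ha : ∀ j ∈ T, a j ∈ ball c R) (hinj : Set.InjOn a T)
    (hf : ∀ x ∈ closedBall c R, (∀ j ∈ T, x ≠ a j) → AnalyticAt ℂ f x)
    (hpole : ∀ j ∈ T, ∃ h : ℂ → ℂ, AnalyticAt ℂ h (a j) ∧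
      ∀ᶠ w in 𝓝[≠] (a j), h w = f w - r j / (w - a j))
    (hz : z ∈ ball c R) (hza : ∀ j ∈ T, z ≠ a j) :
    f z - ∑ j ∈ T, r j / (z - a j) = (2 * π * I : ℂ)⁻¹ • ∮ w in C(c, R), (w - z)⁻¹ • f w := by
  set g : ℂ → ℂ := fun w ↦ f w - ∑ j ∈ T, r j / (w - a j)
  have hg : ∀ x ∈ closedBall c R, (∀ j ∈ T, x ≠ a j) → AnalyticAt ℂ g x := fun x hx hxa ↦
    (hf x hx hxa).sub (analyticAt_sum_div_sub T a r hxa)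
  have hsphere : ∀ w ∈ sphere c R, ∀ j ∈ T, w ≠ a j := fun w hw j hj ↦
    sphere_disjoint_ball.ne_of_mem hw (ha j hj)
  have hremovable : ∀ x ∈ closedBall c R, ∃ φ, AnalyticAt ℂ φ x ∧ g =ᶠ[𝓝[≠] x] φ :=
    fun x hx ↦ exists_analyticAt_eventuallyEq_sub_sum_div_sub hinj hpole (hf x hx)
  have hR : 0 ≤ R := (nonempty_ball.1 ⟨z, hz⟩).le
  have hfR : ContinuousOn f (sphere c R) := fun w hw ↦
    (hf w (sphere_subset_closedBall hw) (hsphere w hw)).continuousAt.continuousWithinAt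
  have hSR : ContinuousOn (fun w ↦ ∑ j ∈ T, r j / (w - a j)) (sphere c R) := fun w hw ↦
    (analyticAt_sum_div_sub T a r (hsphere w hw)).continuousAt.continuousWithinAt
  have hsplit : (∮ w in C(c, R), (w - z)⁻¹ • g w) = ∮ w in C(c, R), (w - z)⁻¹ • f w := by
    simp only [g, smul_sub]
    rw [circleIntegral.integral_sub
      ((continuousOn_sub_inv_sphere_of_mem_ball hz).fun_smul hfR |>.circleIntegrable hR)
      ((continuousOn_sub_inv_sphere_of_mem_ball hz).fun_smul hSR |>.circleIntegrable hR),
      circleIntegral_sub_inv_smul_sum_div_sub_eq_zero T a r hz ha hza, sub_zero]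
  rw [← hsplit, two_pi_I_inv_smul_circleIntegral_sub_inv_smul_of_removable hremovable hz
    (hg z (ball_subset_closedBall hz) hza).continuousAt
    fun w hw ↦ (hg w (sphere_subset_closedBall hw) (hsphere w hw)).continuousAt]

theorem tendsto_two_pi_I_inv_smul_circleIntegral_sub_inv_smul_atTop {f : ℂ → E} (z : ℂ)
    (hf : ∀ ε > 0, ∀ᶠ n : ℕ in atTop, ∀ w ∈ sphere (0 : ℂ) n, ‖f w‖ ≤ ε) :
    Tendsto (fun n : ℕ ↦ (2 * π * I : ℂ)⁻¹ • ∮ w in C(0, (n : ℝ)), (w - z)⁻¹ • f w)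
      atTop (𝓝 0) := by
  refine Metric.tendsto_nhds.2 fun ε hε ↦ ?_
  filter_upwards [hf (ε / 4) (by positivity),
    tendsto_natCast_atTop_atTop.eventually_gt_atTop (2 * ‖z‖)] with n hfn hn
  have hbound : ∀ w ∈ sphere (0 : ℂ) n, ‖(w - z)⁻¹ • f w‖ ≤ (n / 2 : ℝ)⁻¹ * (ε / 4) := by
    intro w hw
    have hwz : (n / 2 : ℝ) ≤ ‖w - z‖ := by
      have := norm_sub_norm_le w z
      rw [mem_sphere_zero_iff_norm.1 hw] at this
      linarith
    rw [norm_smul, norm_inv]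
    exact mul_le_mul (inv_anti₀ (by linarith [norm_nonneg z]) hwz) (hfn w hw) (norm_nonneg _)
      (by positivity)
  rw [dist_zero_right]
  calc _ ≤ (n : ℝ) * ((n / 2 : ℝ)⁻¹ * (ε / 4)) :=
        circleIntegral.norm_two_pi_i_inv_smul_integral_le_of_norm_le_const n.cast_nonneg hbound
    _ = ε / 2 := by
        have : (n : ℝ) ≠ 0 := by linarith [norm_nonneg z]
        field_simp
        ring
    _ < ε := half_lt_self hε

theorem norm_intCast_add_half (m : ℤ) : ‖(m : ℂ) + 1 / 2‖ = |((2 * m + 1 : ℤ) : ℝ)| / 2 := by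
  have : (m : ℂ) + 1 / 2 = (((2 * m + 1 : ℤ) : ℝ) / 2 : ℝ) := by push_cast; ring
  rw [this, Complex.norm_real, Real.norm_eq_abs, abs_div, abs_two]

theorem norm_intCast_add_half_ne_natCast (m : ℤ) (n : ℕ) : ‖(m : ℂ) + 1 / 2‖ ≠ n := by
  rw [norm_intCast_add_half, Ne, div_eq_iff two_ne_zero, ← Int.cast_abs,
    show (n : ℝ) * 2 = ((2 * n : ℤ) : ℝ) by push_cast; ring, Int.cast_inj]
  rcases abs_cases (2 * m + 1) with ⟨h, -⟩ | ⟨h, -⟩ <;> omega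

theorem norm_intCast_add_half_lt_natCast_iff (m : ℤ) (n : ℕ) :
    ‖(m : ℂ) + 1 / 2‖ < n ↔ m ∈ Finset.Ico (-(n : ℤ)) n := by
  rw [norm_intCast_add_half, div_lt_iff₀ two_pos, ← Int.cast_abs, Finset.mem_Ico]
  rw [show (n : ℝ) * 2 = ((2 * n : ℤ) : ℝ) by push_cast; ring, Int.cast_lt, abs_lt]
  omega

theorem norm_intCast_add_half_le_natCast_iff (m : ℤ) (n : ℕ) :
    ‖(m : ℂ) + 1 / 2‖ ≤ n ↔ m ∈ Finset.Ico (-(n : ℤ)) n := by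
  rw [le_iff_lt_or_eq, or_iff_left (norm_intCast_add_half_ne_natCast m n),
    norm_intCast_add_half_lt_natCast_iff]

theorem isOpen_setOf_forall_ne_intCast_add_half :
    IsOpen {z : ℂ | ∀ m : ℤ, z ≠ (m : ℂ) + 1 / 2} := by
  have : {z : ℂ | ∀ m : ℤ, z ≠ (m : ℂ) + 1 / 2} = (· - 1 / 2) ⁻¹' (range ((↑) : ℤ → ℂ))ᶜ := by
    ext z
    simp [eq_sub_iff_add_eq, eq_comm]
  rw [this]
  exact Complex.isOpen_compl_range_intCast.preimage (continuous_sub_right _)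

/-- partial fraction expansion: let `f` be holomorphic on `ℂ \ ℤ'`, with at
most a simple pole at each `a ∈ ℤ'` with residue `r(a)` (i.e. `f(z) - r(a)/(z-a)` extends
holomorphically near `a`), and with `max_{|z|=n} |f(z)| → 0` as `n → ∞` through positive
integers.  Then for every `z ∉ ℤ'`, the symmetric partial sums `∑_{a∈ℤ', |a|<n} r(a)/(z-a)`
converge to `f(z)` as `n → ∞`. -/
theorem partial_fraction_expansion (f : ℂ → ℂ) (r : ℤ → ℂ)
    (hf : DifferentiableOn ℂ f {z : ℂ | ∀ m : ℤ, z ≠ (m : ℂ) + 1 / 2})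
    (hpole : ∀ m : ℤ, ∃ h : ℂ → ℂ, AnalyticAt ℂ h ((m : ℂ) + 1 / 2) ∧
      ∀ᶠ z in 𝓝[≠] ((m : ℂ) + 1 / 2), h z = f z - r m / (z - ((m : ℂ) + 1 / 2)))
    (hdecay : ∀ ε : ℝ, 0 < ε → ∃ N : ℕ, 0 < N ∧ ∀ n : ℕ, N ≤ n → ∀ z : ℂ,
      ‖z‖ = n → ‖f z‖ < ε) :
    ∀ z : ℂ, (∀ m : ℤ, z ≠ (m : ℂ) + 1 / 2) →
      Filter.Tendsto
        (fun n : ℕ => ∑ m ∈ Finset.Ico (-(n : ℤ)) (n : ℤ), r m / (z - ((m : ℂ) + 1 / 2)))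
        Filter.atTop (𝓝 (f z)) := by
  intro z hz
  have hexpansion : ∀ᶠ n : ℕ in atTop,
      f z - (2 * π * I : ℂ)⁻¹ • (∮ w in C(0, (n : ℝ)), (w - z)⁻¹ • f w) =
        ∑ m ∈ Finset.Ico (-(n : ℤ)) (n : ℤ), r m / (z - ((m : ℂ) + 1 / 2)) := by
    filter_upwards [tendsto_natCast_atTop_atTop.eventually_gt_atTop ‖z‖] with n hn
    have hf_analytic (x : ℂ) (hx : x ∈ closedBall 0 (n : ℝ))
        (hxa : ∀ m ∈ Finset.Ico (-(n : ℤ)) n, x ≠ (m : ℂ) + 1 / 2) : AnalyticAt ℂ f x := by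
      refine hf.analyticAt (isOpen_setOf_forall_ne_intCast_add_half.mem_nhds fun m hm ↦ ?_)
      rw [mem_closedBall_zero_iff, hm, norm_intCast_add_half_le_natCast_iff] at hx
      exact hxa m hx hm
    rw [← sub_sum_div_sub_eq_circleIntegral (a := fun m : ℤ ↦ (m : ℂ) + 1 / 2)
      (fun m hm ↦ mem_ball_zero_iff.2 ((norm_intCast_add_half_lt_natCast_iff m n).2 hm))
      (fun m _ k _ h ↦ by simpa using h) hf_analytic (fun m _ ↦ hpole m)
      (mem_ball_zero_iff.2 hn) (fun m _ ↦ hz m), sub_sub_cancel]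
  have hdecay' : ∀ ε > 0, ∀ᶠ n : ℕ in atTop, ∀ w ∈ sphere (0 : ℂ) n, ‖f w‖ ≤ ε := fun ε hε ↦
    let ⟨N, _, hN⟩ := hdecay ε hε
    eventually_atTop.2 ⟨N, fun n hn w hw ↦ (hN n hn w (mem_sphere_zero_iff_norm.1 hw)).le⟩
  simpa using (tendsto_const_nhds.sub
    (tendsto_two_pi_I_inv_smul_circleIntegral_sub_inv_smul_atTop z hdecay')).congr' hexpansion
end
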